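/- For the five-qubit code, the minimum symplectic weight of an element of S^⊥ \ S equals 3, where S^⊥ = {v ∈ F₂^{10} : ω(v, s_i) = 0 for i = 1,2,3,4}. That is, no nonzero vector of symplectic weight at most 2 lies in S^⊥, and there exists a vector of symplectic weight 3 lying in S^⊥ but not in S. Hence the five-qubit code has minimum distance D = 3. -/
import Mathlib


/-- The binary field `F₂`. -/
abbrev F2 := ZMod 2

/-- Symplectic vectors representing `N`-qubit Pauli operators modulo phase:
`(a, b)` corresponds to `⊗ₙ X^{aₙ} Z^{bₙ}` (per qubit: `I ↦ (0,0)`, `X ↦ (1,0)`,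
`Z ↦ (0,1)`, `Y ↦ (1,1)`). -/
abbrev PauliVec (N : ℕ) := (Fin N → F2) × (Fin N → F2)

/-- The standard symplectic form `ω((a,b),(c,d)) = a·d + b·c`. -/
def omegaForm {N : ℕ} (u v : PauliVec N) : F2 :=
  (∑ i, u.1 i * v.2 i) + (∑ i, u.2 i * v.1 i)

/-- The symplectic weight: the number of qubit positions `n` with `(aₙ,bₙ) ≠ (0,0)`. -/
def sweight {N : ℕ} (v : PauliVec N) : ℕ :=
  (Finset.univ.filter fun i => ¬(v.1 i = 0 ∧ v.2 i = 0)).card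

/-- The four check-matrix rows of the five-qubit code:
`S₁ = XZZXI`, `S₂ = IXZZX`, `S₃ = XIXZZ`, `S₄ = ZXIXZ`. -/
def fiveS : Fin 4 → PauliVec 5 :=
  ![(![1, 0, 0, 1, 0], ![0, 1, 1, 0, 0]),
    (![0, 1, 0, 0, 1], ![0, 0, 1, 1, 0]),
    (![1, 0, 1, 0, 0], ![0, 0, 0, 1, 1]),
    (![0, 1, 0, 1, 0], ![1, 0, 0, 0, 1])]

/-- The stabilizer subspace `S` of the five-qubit code, spanned by `s₁, s₂, s₃, s₄`. -/
def fiveSpan : Submodule F2 (PauliVec 5) := Submodule.span F2 (Set.range fiveS)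

/-- `S^⊥ = {v ∈ F₂^{10} : ω(v, sᵢ) = 0 for i = 1,2,3,4}` for the five-qubit code. -/
def fivePerp : Set (PauliVec 5) := {v | ∀ i : Fin 4, omegaForm v (fiveS i) = 0}


set_option maxHeartbeats 2000000 in
set_option synthInstance.maxHeartbeats 400000 in
set_option synthInstance.maxSize 2000 in
lemma aux_dec : ∀ a0 a1 a2 a3 a4 b0 b1 b2 b3 b4 : F2,
    a1 + a2 + (b0 + b3) = 0 → a2 + a3 + (b1 + b4) = 0 →
    a3 + a4 + (b0 + b2) = 0 → a0 + a4 + (b1 + b3) = 0 →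
    ¬(a0 = 0 ∧ a1 = 0 ∧ a2 = 0 ∧ a3 = 0 ∧ a4 = 0 ∧
      b0 = 0 ∧ b1 = 0 ∧ b2 = 0 ∧ b3 = 0 ∧ b4 = 0) →
    3 ≤ (if ¬(a0 = 0 ∧ b0 = 0) then 1 else 0) + ((if ¬(a1 = 0 ∧ b1 = 0) then 1 else 0)
      + ((if ¬(a2 = 0 ∧ b2 = 0) then 1 else 0) + ((if ¬(a3 = 0 ∧ b3 = 0) then 1 else 0)
      + (if ¬(a4 = 0 ∧ b4 = 0) then 1 else 0)))) := by decide

lemma sweight_eq5 (v : PauliVec 5) :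
    sweight v = (if ¬(v.1 0 = 0 ∧ v.2 0 = 0) then 1 else 0)
      + ((if ¬(v.1 1 = 0 ∧ v.2 1 = 0) then 1 else 0)
      + ((if ¬(v.1 2 = 0 ∧ v.2 2 = 0) then 1 else 0)
      + ((if ¬(v.1 3 = 0 ∧ v.2 3 = 0) then 1 else 0)
      + (if ¬(v.1 4 = 0 ∧ v.2 4 = 0) then 1 else 0)))) := by
  rw [sweight, Finset.card_filter, Fin.sum_univ_five]; ring

lemma five_part1 : ∀ v : PauliVec 5, v ∈ fivePerp → v ≠ 0 → 3 ≤ sweight v := by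
  intro v hp hne
  have h0 := hp 0; have h1 := hp 1; have h2 := hp 2; have h3 := hp 3
  simp only [omegaForm, fiveS, Fin.sum_univ_five, Matrix.cons_val_zero, Matrix.cons_val_one,
    Matrix.head_cons, Matrix.cons_val_two, Matrix.tail_cons, Matrix.cons_val_three,
    Matrix.cons_val_four, Matrix.cons_val_fin_one, mul_one, mul_zero, zero_add, add_zero,
    one_mul, zero_mul] at h0 h1 h2 h3
  rw [sweight_eq5]
  refine aux_dec _ _ _ _ _ _ _ _ _ _ h0 h1 h2 h3 ?_
  rintro ⟨e0, e1, e2, e3, e4, f0, f1, f2, f3, f4⟩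
  apply hne
  refine Prod.ext (funext fun i => ?_) (funext fun i => ?_) <;> fin_cases i <;> assumption

/-- A linear functional vanishing on the stabilizers but not on our weight-3 vector. -/
def phiZ : PauliVec 5 →ₗ[F2] F2 where
  toFun p := ∑ i, p.2 i
  map_add' x y := by simp [Finset.sum_add_distrib]
  map_smul' c x := by simp [Finset.mul_sum]

def vthree : PauliVec 5 := (![0, 0, 0, 0, 1], ![0, 1, 1, 0, 1])

lemma vthree_not_mem : vthree ∉ fiveSpan := by
  intro h
  have hker : fiveSpan ≤ LinearMap.ker phiZ := by
    rw [fiveSpan, Submodule.span_le]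
    rintro _ ⟨j, rfl⟩
    fin_cases j <;>
      simp [phiZ, fiveS, LinearMap.mem_ker, Fin.sum_univ_five] <;> decide
  have h0 : phiZ vthree = 0 := hker h
  have h1 : phiZ vthree = 1 := by
    simp only [phiZ, vthree, LinearMap.coe_mk, AddHom.coe_mk, Fin.sum_univ_five]
    decide
  rw [h1] at h0
  exact one_ne_zero h0

lemma vthree_perp : vthree ∈ fivePerp := by
  intro i
  fin_cases i <;>
    simp [omegaForm, vthree, fiveS, Fin.sum_univ_five] <;> decide

lemma vthree_weight : sweight vthree = 3 := by
  rw [sweight_eq5]; decide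

lemma five_part2 : ∃ v : PauliVec 5, v ∈ fivePerp ∧ v ∉ fiveSpan ∧ sweight v = 3 :=
  ⟨vthree, vthree_perp, vthree_not_mem, vthree_weight⟩


/-- The five-qubit code has minimum distance 3: no nonzero vector of symplectic weight
at most 2 lies in `S^⊥`, there is a weight-3 vector in `S^⊥ \ S`, and hence `3` is the
least symplectic weight of an element of `S^⊥ \ S`. -/
theorem five_qubit_min_distance :
    (∀ v : PauliVec 5, v ∈ fivePerp → v ≠ 0 → 3 ≤ sweight v) ∧
    (∃ v : PauliVec 5, v ∈ fivePerp ∧ v ∉ fiveSpan ∧ sweight v = 3) ∧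
    IsLeast {w : ℕ | ∃ v : PauliVec 5, v ∈ fivePerp ∧ v ∉ fiveSpan ∧ sweight v = w} 3 := by
  refine ⟨five_part1, five_part2, ⟨⟨vthree, vthree_perp, vthree_not_mem, vthree_weight⟩, ?_⟩⟩
  rintro w ⟨v, hp, hs, rfl⟩
  exact five_part1 v hp (fun h => hs (h ▸ fiveSpan.zero_mem))
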